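/- There exists a constant C > 0, depending only on Δ, such that for every horizon T ≥ 2 there is a pure Alice strategy S_A with the following property: for every trajectory (a_t, b_t)_{t=1}^T consistent with S_A in which Bob is myopic — i.e. b_t = L implies V_B(a_t) ≥ 1 − V_B(a_t), and b_t = R implies 1 − V_B(a_t) ≥ V_B(a_t), for every t — Alice's Stackelberg regret satisfies Σ_{t=1}^T (u_A^* − u_A^t) ≤ C·(1 + log T). -/

import Mathlib

/-!
Alice first bisects for `K = ⌈log₂ T⌉` rounds: a myopic Bob's choice at the midpoint of the
current interval reveals on which side of it his midpoint `m_B` lies, so after `K` rounds `m_B`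
is trapped in an interval `[l, r]` of width at most `1/T`. In every later round Alice cuts at
distance `1/T` outside `[l, r]`, on the side whose piece she prefers. Since `V_B` is strictly
increasing, Bob strictly prefers the piece containing `m_B` and leaves Alice the other one,
which she values within `2Δ/T` of `u_A^*` because `V_A` is `Δ`-Lipschitz. The regret is thus at
most `K` for the search rounds plus `2Δ` for all the others.
-/

open MeasureTheory

/-- Bob's choice of the left or right piece. -/
inductive Choice
  | L
  | R
deriving DecidableEq

instance : Fintype Choice :=
  ⟨{Choice.L, Choice.R}, fun x => by cases x <;> simp⟩

/-- The cumulative valuation `V(x) = ∫_0^x v`. -/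
noncomputable def cumul (v : ℝ → ℝ) (x : ℝ) : ℝ := ∫ y in (0:ℝ)..x, v y

/-- `v` is an integrable value density on `[0,1]`, bounded between `lo` and `hi`,
integrating to `1`. -/
def IsDensity (lo hi : ℝ) (v : ℝ → ℝ) : Prop :=
  IntervalIntegrable v volume 0 1 ∧
  (∀ x ∈ Set.Icc (0:ℝ) 1, lo ≤ v x ∧ v x ≤ hi) ∧
  (∫ y in (0:ℝ)..1, v y) = 1

/-- Alice's round-`t` utility: if Bob picks `L` she gets `[a_t,1]`, else `[0,a_t]`. -/
noncomputable def uA (vA : ℝ → ℝ) (a : ℕ → ℝ) (b : ℕ → Choice) (t : ℕ) : ℝ :=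
  if b t = Choice.L then 1 - cumul vA (a t) else cumul vA (a t)

/-- Bob's round-`t` utility: if he picks `L` he gets `[0,a_t]`, else `[a_t,1]`. -/
noncomputable def uB (vB : ℝ → ℝ) (a : ℕ → ℝ) (b : ℕ → Choice) (t : ℕ) : ℝ :=
  if b t = Choice.L then cumul vB (a t) else 1 - cumul vB (a t)

/-- A pure Alice strategy: given the history `(a_1,…,a_t; b_1,…,b_t)`, produce the
next cut `a_{t+1}`. -/
def AliceStrategy : Type := ∀ t : ℕ, (Fin t → ℝ) → (Fin t → Choice) → ℝ

/-- A pure (sequential) Bob strategy: given `(a_1,…,a_{t+1}; b_1,…,b_t)`, produce the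
next choice `b_{t+1}`. -/
def BobStrategy : Type := ∀ t : ℕ, (Fin (t+1) → ℝ) → (Fin t → Choice) → Choice

/-- The trajectory `(a,b)` is consistent with Alice's strategy `S` over horizon `T`. -/
def AliceConsistent (S : AliceStrategy) (a : ℕ → ℝ) (b : ℕ → Choice) (T : ℕ) : Prop :=
  ∀ t : ℕ, t < T → a (t+1) = S t (fun i => a (i.1+1)) (fun i => b (i.1+1))

/-- The trajectory `(a,b)` is consistent with Bob's strategy `S` over horizon `T`. -/
def BobConsistent (S : BobStrategy) (a : ℕ → ℝ) (b : ℕ → Choice) (T : ℕ) : Prop :=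
  ∀ t : ℕ, t < T → b (t+1) = S t (fun i => a (i.1+1)) (fun i => b (i.1+1))

/-- Alice's Stackelberg value `u_A^* = max(V_A(m_B), 1 - V_A(m_B))`. -/
noncomputable def stackValue (vA : ℝ → ℝ) (mB : ℝ) : ℝ :=
  max (cumul vA mB) (1 - cumul vA mB)

open Set

theorem cumul_zero (v : ℝ → ℝ) : cumul v 0 = 0 := intervalIntegral.integral_same

namespace IsDensity

variable {lo hi : ℝ} {v : ℝ → ℝ} {x y : ℝ}

theorem intervalIntegrable_of_mem (hv : IsDensity lo hi v) (hx : x ∈ Icc (0:ℝ) 1)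
    (hy : y ∈ Icc (0:ℝ) 1) : IntervalIntegrable v volume x y := by
  refine hv.1.mono_set (uIcc_subset_uIcc ?_ ?_) <;> rwa [uIcc_of_le zero_le_one]

theorem cumul_sub_cumul (hv : IsDensity lo hi v) (hx : x ∈ Icc (0:ℝ) 1)
    (hy : y ∈ Icc (0:ℝ) 1) : cumul v y - cumul v x = ∫ t in x..y, v t :=
  intervalIntegral.integral_interval_sub_left
    (hv.intervalIntegrable_of_mem (left_mem_Icc.2 zero_le_one) hy)
    (hv.intervalIntegrable_of_mem (left_mem_Icc.2 zero_le_one) hx)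

theorem mul_sub_le_cumul_sub (hv : IsDensity lo hi v) (hx : x ∈ Icc (0:ℝ) 1)
    (hy : y ∈ Icc (0:ℝ) 1) (hxy : x ≤ y) : lo * (y - x) ≤ cumul v y - cumul v x := by
  have h := intervalIntegral.integral_mono_on hxy intervalIntegrable_const
    (hv.intervalIntegrable_of_mem hx hy) fun z hz => (hv.2.1 z (Icc_subset_Icc hx.1 hy.2 hz)).1
  rw [intervalIntegral.integral_const, smul_eq_mul, ← hv.cumul_sub_cumul hx hy] at h
  linarith

theorem cumul_sub_le_mul_sub (hv : IsDensity lo hi v) (hx : x ∈ Icc (0:ℝ) 1)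
    (hy : y ∈ Icc (0:ℝ) 1) (hxy : x ≤ y) : cumul v y - cumul v x ≤ hi * (y - x) := by
  have h := intervalIntegral.integral_mono_on hxy (hv.intervalIntegrable_of_mem hx hy)
    intervalIntegrable_const fun z hz => (hv.2.1 z (Icc_subset_Icc hx.1 hy.2 hz)).2
  rw [intervalIntegral.integral_const, smul_eq_mul, ← hv.cumul_sub_cumul hx hy] at h
  linarith

theorem cumul_one (hv : IsDensity lo hi v) : cumul v 1 = 1 := hv.2.2

theorem one_le_hi (hv : IsDensity lo hi v) : 1 ≤ hi := by
  have h := hv.cumul_sub_le_mul_sub (left_mem_Icc.2 zero_le_one) (right_mem_Icc.2 zero_le_one)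
    zero_le_one
  rw [hv.cumul_one, cumul_zero] at h
  linarith

theorem monotoneOn_cumul (hv : IsDensity lo hi v) (hlo : 0 ≤ lo) :
    MonotoneOn (cumul v) (Icc 0 1) := fun x hx y hy hxy => by
  nlinarith [hv.mul_sub_le_cumul_sub hx hy hxy]

theorem strictMonoOn_cumul (hv : IsDensity lo hi v) (hlo : 0 < lo) :
    StrictMonoOn (cumul v) (Icc 0 1) := fun x hx y hy hxy => by
  nlinarith [hv.mul_sub_le_cumul_sub hx hy hxy.le]

theorem cumul_mem_Icc (hv : IsDensity lo hi v) (hlo : 0 ≤ lo) (hx : x ∈ Icc (0:ℝ) 1) :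
    cumul v x ∈ Icc (0:ℝ) 1 := by
  have hmono := hv.monotoneOn_cumul hlo
  refine ⟨?_, ?_⟩
  · simpa [cumul_zero] using hmono (left_mem_Icc.2 zero_le_one) hx hx.1
  · simpa [hv.cumul_one] using hmono hx (right_mem_Icc.2 zero_le_one) hx.2

theorem mem_Ioo_of_cumul_eq_half (hv : IsDensity lo hi v) (hx : x ∈ Icc (0:ℝ) 1)
    (hvx : cumul v x = 1 / 2) : x ∈ Ioo (0:ℝ) 1 := by
  refine ⟨hx.1.lt_of_ne ?_, hx.2.lt_of_ne ?_⟩ <;> rintro rfl <;>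
    norm_num [cumul_zero, hv.cumul_one] at hvx

end IsDensity

def MyopicResponse (V : ℝ → ℝ) (x : ℝ) (c : Choice) : Prop :=
  (c = Choice.L → 1 - V x ≤ V x) ∧ (c = Choice.R → V x ≤ 1 - V x)

namespace MyopicResponse

variable {V : ℝ → ℝ} {x m : ℝ} {c : Choice}

theorem le_of_eq_L (hc : MyopicResponse V x c) (hV : StrictMonoOn V (Icc 0 1))
    (hx : x ∈ Icc (0:ℝ) 1) (hm : m ∈ Icc (0:ℝ) 1) (hVm : V m = 1 / 2) (hL : c = Choice.L) :
    m ≤ x :=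
  (hV.le_iff_le hm hx).1 (by linarith [hc.1 hL])

theorem le_of_eq_R (hc : MyopicResponse V x c) (hV : StrictMonoOn V (Icc 0 1))
    (hx : x ∈ Icc (0:ℝ) 1) (hm : m ∈ Icc (0:ℝ) 1) (hVm : V m = 1 / 2) (hR : c = Choice.R) :
    x ≤ m :=
  (hV.le_iff_le hx hm).1 (by linarith [hc.2 hR])

theorem eq_R_of_lt (hc : MyopicResponse V x c) (hV : StrictMonoOn V (Icc 0 1))
    (hx : x ∈ Icc (0:ℝ) 1) (hm : m ∈ Icc (0:ℝ) 1) (hVm : V m = 1 / 2) (hxm : x < m) :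
    c = Choice.R := by
  cases c
  · exact absurd (hc.le_of_eq_L hV hx hm hVm rfl) hxm.not_ge
  · rfl

theorem eq_L_of_lt (hc : MyopicResponse V x c) (hV : StrictMonoOn V (Icc 0 1))
    (hx : x ∈ Icc (0:ℝ) 1) (hm : m ∈ Icc (0:ℝ) 1) (hVm : V m = 1 / 2) (hmx : m < x) :
    c = Choice.L := by
  cases c
  · rfl
  · exact absurd (hc.le_of_eq_R hV hx hm hVm rfl) hmx.not_ge

end MyopicResponse

noncomputable def halve (I : ℝ × ℝ) : Choice → ℝ × ℝ
  | .L => (I.1, (I.1 + I.2) / 2)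
  | .R => ((I.1 + I.2) / 2, I.2)

noncomputable def bisect (h : ℕ → Choice) : ℕ → ℝ × ℝ
  | 0 => (0, 1)
  | n + 1 => halve (bisect h n) (h n)

theorem bisect_bounds (h : ℕ → Choice) (n : ℕ) :
    0 ≤ (bisect h n).1 ∧ (bisect h n).2 ≤ 1 ∧ (bisect h n).2 - (bisect h n).1 = (1 / 2) ^ n := by
  induction n with
  | zero => norm_num [bisect]
  | succ n ih =>
    obtain ⟨h0, h1, hw⟩ := ih
    have hpos : (0:ℝ) ≤ (1 / 2) ^ n := by positivity
    cases hc : h n <;> simp only [bisect, halve, hc] <;> refine ⟨?_, ?_, ?_⟩ <;>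
      first | rw [pow_succ]; linarith | linarith

theorem bisect_congr {h h' : ℕ → Choice} {n : ℕ} (he : ∀ i < n, h i = h' i) :
    bisect h n = bisect h' n := by
  induction n with
  | zero => rfl
  | succ n ih =>
    simp only [bisect, ih fun i hi => he i (hi.trans n.lt_succ_self), he n n.lt_succ_self]

theorem mem_bisect_of_myopicResponse {V : ℝ → ℝ} (hV : StrictMonoOn V (Icc 0 1)) {m : ℝ}
    (hm : m ∈ Icc (0:ℝ) 1) (hVm : V m = 1 / 2) {h : ℕ → Choice} {n : ℕ}
    (hmyo : ∀ i < n, MyopicResponse V (((bisect h i).1 + (bisect h i).2) / 2) (h i)) :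
    m ∈ Icc (bisect h n).1 (bisect h n).2 := by
  induction n with
  | zero => exact hm
  | succ n ih =>
    obtain ⟨hl, hr⟩ := ih fun i hi => hmyo i (hi.trans n.lt_succ_self)
    obtain ⟨h0, h1, -⟩ := bisect_bounds h n
    have hmid : ((bisect h n).1 + (bisect h n).2) / 2 ∈ Icc (0:ℝ) 1 :=
      ⟨by linarith, by linarith⟩
    have hc := hmyo n n.lt_succ_self
    cases hn : h n
    · simpa only [bisect, halve, hn] using ⟨hl, hc.le_of_eq_L hV hmid hm hVm hn⟩
    · simpa only [bisect, halve, hn] using ⟨hc.le_of_eq_R hV hmid hm hVm hn, hr⟩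

noncomputable def exploitCut (vA : ℝ → ℝ) (ε : ℝ) (I : ℝ × ℝ) : ℝ :=
  if 1 - cumul vA I.2 ≤ cumul vA I.1 then max (I.1 - ε) 0 else min (I.2 + ε) 1

noncomputable def searchCut (vA : ℝ → ℝ) (ε : ℝ) (K : ℕ) (h : ℕ → Choice) (t : ℕ) : ℝ :=
  if t < K then ((bisect h t).1 + (bisect h t).2) / 2 else exploitCut vA ε (bisect h K)

/-- The history of Bob's choices is padded to a sequence; `searchCut … t` reads only its
entries `< t`. -/
noncomputable def searchStrategy (vA : ℝ → ℝ) (ε : ℝ) (K : ℕ) : AliceStrategy :=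
  fun t _ hb => searchCut vA ε K (fun i => if hi : i < t then hb ⟨i, hi⟩ else Choice.L) t

theorem searchCut_mem_Icc (vA : ℝ → ℝ) {ε : ℝ} (hε : 0 ≤ ε) (K : ℕ) (h : ℕ → Choice)
    (t : ℕ) : searchCut vA ε K h t ∈ Icc (0:ℝ) 1 := by
  unfold searchCut exploitCut
  split_ifs
  · obtain ⟨h0, h1, hw⟩ := bisect_bounds h t
    have : (0:ℝ) ≤ (1 / 2) ^ t := by positivity
    exact ⟨by linarith, by linarith⟩
  all_goals
    obtain ⟨h0, h1, hw⟩ := bisect_bounds h K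
    have : (0:ℝ) ≤ (1 / 2) ^ K := by positivity
  · exact ⟨le_max_right _ _, max_le (by linarith) zero_le_one⟩
  · exact ⟨le_min (by linarith) zero_le_one, min_le_right _ _⟩

theorem searchCut_congr {vA : ℝ → ℝ} {ε : ℝ} {K : ℕ} {h h' : ℕ → Choice} {t : ℕ}
    (he : ∀ i < t, h i = h' i) : searchCut vA ε K h t = searchCut vA ε K h' t := by
  unfold searchCut
  split_ifs with htK
  · rw [bisect_congr he]
  · rw [bisect_congr fun i hi => he i (hi.trans_le (not_lt.1 htK))]

theorem AliceConsistent.eq_searchCut {vA : ℝ → ℝ} {ε : ℝ} {K : ℕ} {a : ℕ → ℝ}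
    {b : ℕ → Choice} {T : ℕ} (hcons : AliceConsistent (searchStrategy vA ε K) a b T) {t : ℕ}
    (ht : t < T) : a (t + 1) = searchCut vA ε K (fun i => b (i + 1)) t := by
  rw [hcons t ht]
  exact searchCut_congr fun i hi => by simp [hi]

section Regret

variable {lo hi : ℝ} {vA : ℝ → ℝ} {m : ℝ}

theorem stackValue_sub_uA_le_one (hA : IsDensity lo hi vA) (hlo : 0 ≤ lo)
    (hm : m ∈ Icc (0:ℝ) 1) {a : ℕ → ℝ} {b : ℕ → Choice} {t : ℕ} (ha : a t ∈ Icc (0:ℝ) 1) :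
    stackValue vA m - uA vA a b t ≤ 1 := by
  obtain ⟨hm0, hm1⟩ := hA.cumul_mem_Icc hlo hm
  obtain ⟨ha0, ha1⟩ := hA.cumul_mem_Icc hlo ha
  have hstack : stackValue vA m ≤ 1 := max_le hm1 (by linarith)
  unfold uA
  split_ifs <;> linarith

theorem stackValue_sub_cumul_le (hA : IsDensity lo hi vA) {x l r : ℝ} (hx : 0 ≤ x)
    (hxl : x ≤ l) (hlm : l ≤ m) (hmr : m ≤ r) (hr : r ≤ 1)
    (hside : 1 - cumul vA r ≤ cumul vA l) : stackValue vA m - cumul vA x ≤ hi * (r - x) := by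
  have hxI : x ∈ Icc (0:ℝ) 1 := ⟨hx, by linarith⟩
  have hlI : l ∈ Icc (0:ℝ) 1 := ⟨by linarith, by linarith⟩
  have hmI : m ∈ Icc (0:ℝ) 1 := ⟨by linarith, by linarith⟩
  have hrI : r ∈ Icc (0:ℝ) 1 := ⟨by linarith, hr⟩
  have hxm := hA.cumul_sub_le_mul_sub hxI hmI (hxl.trans hlm)
  have hxl' := hA.cumul_sub_le_mul_sub hxI hlI hxl
  have hmr' := hA.cumul_sub_le_mul_sub hmI hrI hmr
  have hhi := hA.one_le_hi
  rw [stackValue, sub_le_iff_le_add]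
  apply max_le <;> nlinarith

theorem stackValue_sub_one_sub_cumul_le (hA : IsDensity lo hi vA) {x l r : ℝ} (hl : 0 ≤ l)
    (hlm : l ≤ m) (hmr : m ≤ r) (hrx : r ≤ x) (hx : x ≤ 1)
    (hside : cumul vA l ≤ 1 - cumul vA r) :
    stackValue vA m - (1 - cumul vA x) ≤ hi * (x - l) := by
  have hxI : x ∈ Icc (0:ℝ) 1 := ⟨by linarith, hx⟩
  have hlI : l ∈ Icc (0:ℝ) 1 := ⟨hl, by linarith⟩
  have hmI : m ∈ Icc (0:ℝ) 1 := ⟨by linarith, by linarith⟩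
  have hrI : r ∈ Icc (0:ℝ) 1 := ⟨by linarith, by linarith⟩
  have hmx := hA.cumul_sub_le_mul_sub hmI hxI (hmr.trans hrx)
  have hrx' := hA.cumul_sub_le_mul_sub hrI hxI hrx
  have hlm' := hA.cumul_sub_le_mul_sub hlI hmI hlm
  have hhi := hA.one_le_hi
  rw [stackValue, sub_le_iff_le_add]
  apply max_le <;> nlinarith

theorem stackValue_sub_uA_le_of_exploitCut (hA : IsDensity lo hi vA) {vB : ℝ → ℝ}
    (hV : StrictMonoOn (cumul vB) (Icc 0 1)) (hm : m ∈ Ioo (0:ℝ) 1) (hVm : cumul vB m = 1 / 2)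
    {ε : ℝ} (hε : 0 < ε) {I : ℝ × ℝ} (hI0 : 0 ≤ I.1) (hI1 : I.2 ≤ 1)
    (hIm : m ∈ Icc I.1 I.2) (hIε : I.2 - I.1 ≤ ε) {a : ℕ → ℝ} {b : ℕ → Choice} {t : ℕ}
    (ha : a t = exploitCut vA ε I) (hmyo : MyopicResponse (cumul vB) (a t) (b t)) :
    stackValue vA m - uA vA a b t ≤ 2 * hi * ε := by
  have hhi := hA.one_le_hi
  have hmI := Ioo_subset_Icc_self hm
  have hI := hIm.1.trans hIm.2
  unfold exploitCut at ha
  split_ifs at ha with hside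
  · have haI : a t ∈ Icc (0:ℝ) 1 := ha ▸ ⟨le_max_right _ _, max_le (by linarith) zero_le_one⟩
    have hlt : a t < m := ha ▸ max_lt (by linarith [hIm.1]) hm.1
    have hR := hmyo.eq_R_of_lt hV haI hmI hVm hlt
    have hlow : I.1 - ε ≤ a t := ha ▸ le_max_left _ _
    rw [uA, if_neg (by simp [hR])]
    calc stackValue vA m - cumul vA (a t) ≤ hi * (I.2 - a t) :=
          stackValue_sub_cumul_le hA haI.1 (ha ▸ max_le (by linarith) hI0) hIm.1 hIm.2 hI1 hside
      _ ≤ 2 * hi * ε := by nlinarith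
  · have haI : a t ∈ Icc (0:ℝ) 1 := ha ▸ ⟨le_min (by linarith) zero_le_one, min_le_right _ _⟩
    have hlt : m < a t := ha ▸ lt_min (by linarith [hIm.2]) hm.2
    have hL := hmyo.eq_L_of_lt hV haI hmI hVm hlt
    have hup : a t ≤ I.2 + ε := ha ▸ min_le_left _ _
    rw [uA, if_pos hL]
    calc stackValue vA m - (1 - cumul vA (a t)) ≤ hi * (a t - I.1) :=
          stackValue_sub_one_sub_cumul_le hA hI0 hIm.1 hIm.2 (ha ▸ le_min (by linarith) hI1)
            haI.2 (by linarith)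
      _ ≤ 2 * hi * ε := by nlinarith

theorem stackValue_sub_uA_le_of_searchStrategy (hA : IsDensity lo hi vA) (hlo : 0 ≤ lo)
    {lo' hi' : ℝ} {vB : ℝ → ℝ} (hB : IsDensity lo' hi' vB) (hlo' : 0 < lo')
    (hm : m ∈ Icc (0:ℝ) 1) (hVm : cumul vB m = 1 / 2) {ε : ℝ} (hε : 0 < ε) {K : ℕ}
    (hKε : (1 / 2 : ℝ) ^ K ≤ ε) {a : ℕ → ℝ} {b : ℕ → Choice} {T : ℕ}
    (hcons : AliceConsistent (searchStrategy vA ε K) a b T)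
    (hmyo : ∀ t, 1 ≤ t → t ≤ T → MyopicResponse (cumul vB) (a t) (b t))
    {t : ℕ} (ht : t ∈ Finset.Icc 1 T) :
    stackValue vA m - uA vA a b t ≤ (if t ≤ K then 1 else 0) + 2 * hi * ε := by
  obtain ⟨ht1, htT⟩ := Finset.mem_Icc.1 ht
  obtain ⟨n, rfl⟩ : ∃ n, t = n + 1 := ⟨t - 1, by omega⟩
  have hcut : ∀ i < T, a (i + 1) = searchCut vA ε K (fun i => b (i + 1)) i :=
    fun i hi => hcons.eq_searchCut hi
  have hhi := hA.one_le_hi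
  split_ifs with hnK
  · have := stackValue_sub_uA_le_one (b := b) hA hlo hm
      (hcut n htT ▸ searchCut_mem_Icc vA hε.le K _ n)
    nlinarith
  · have hV := hB.strictMonoOn_cumul hlo'
    have hIm := mem_bisect_of_myopicResponse hV hm hVm (n := K) fun i hi => by
      have := hmyo (i + 1) (by omega) (by omega)
      rwa [hcut i (by omega), searchCut, if_pos hi] at this
    obtain ⟨h0, h1, hw⟩ := bisect_bounds (fun i => b (i + 1)) K
    have := stackValue_sub_uA_le_of_exploitCut hA hV (hB.mem_Ioo_of_cumul_eq_half hm hVm) hVm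
      hε h0 h1 hIm (hw ▸ hKε) (by rw [hcut n htT, searchCut, if_neg (by omega)])
      (hmyo (n + 1) ht1 htT)
    linarith

end Regret

theorem sum_Icc_indicator_add_le (T K : ℕ) (c : ℝ) :
    ∑ t ∈ Finset.Icc 1 T, ((if t ≤ K then 1 else 0) + c) ≤ K + T * c := by
  rw [Finset.sum_add_distrib, Finset.sum_const, Nat.card_Icc, Nat.add_sub_cancel, nsmul_eq_mul,
    Finset.sum_boole]
  have hsub : {t ∈ Finset.Icc 1 T | t ≤ K} ⊆ Finset.Icc 1 K := fun t ht => by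
    simp only [Finset.mem_filter, Finset.mem_Icc] at ht ⊢
    omega
  have hcard := Finset.card_le_card hsub
  rw [Nat.card_Icc, Nat.add_sub_cancel] at hcard
  gcongr

theorem clog_two_le_one_add_two_mul_log (n : ℕ) :
    (Nat.clog 2 n : ℝ) ≤ 1 + 2 * Real.log n := by
  have hlogb : 0 ≤ Real.logb 2 n := by
    rcases n.eq_zero_or_pos with rfl | hn
    · simp
    · exact Real.logb_nonneg one_lt_two (by exact_mod_cast hn)
  have hceil := Nat.ceil_lt_add_one hlogb
  have hlog2 : (1 / 2 : ℝ) < Real.log 2 := by linarith [Real.log_two_gt_d9]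
  have hlogb_le : Real.logb 2 n ≤ 2 * Real.log n := by
    rw [Real.logb, div_le_iff₀ (by linarith)]
    nlinarith [Real.log_natCast_nonneg n]
  rw [← Real.natCeil_logb_natCast, Nat.cast_ofNat]
  linarith

/-- There is a constant `C > 0` depending only on `Δ` such that for every
horizon `T ≥ 2` Alice has a pure strategy whose Stackelberg regret against any myopic Bob
is at most `C·(1 + log T)`. -/
theorem alice_exploits_myopic_bob (Δ : ℝ) (hΔ : 0 < Δ) :
    ∃ C : ℝ, 0 < C ∧
      ∀ (δ : ℝ) (vA : ℝ → ℝ), 0 < δ → δ ≤ Δ → IsDensity δ Δ vA →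
      ∀ T : ℕ, 2 ≤ T →
      ∃ SA : AliceStrategy,
        (∀ t h₁ h₂, SA t h₁ h₂ ∈ Set.Icc (0:ℝ) 1) ∧
        ∀ (vB : ℝ → ℝ), IsDensity δ Δ vB →
        ∀ mB : ℝ, mB ∈ Set.Icc (0:ℝ) 1 → cumul vB mB = 1/2 →
        ∀ (a : ℕ → ℝ) (b : ℕ → Choice),
          AliceConsistent SA a b T →
          (∀ t : ℕ, 1 ≤ t → t ≤ T →
            (b t = Choice.L → 1 - cumul vB (a t) ≤ cumul vB (a t)) ∧
            (b t = Choice.R → cumul vB (a t) ≤ 1 - cumul vB (a t))) →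
          ∑ t ∈ Finset.Icc 1 T, (stackValue vA mB - uA vA a b t) ≤
            C * (1 + Real.log T) := by
  refine ⟨2 + 2 * Δ, by positivity, fun δ vA hδ _ hA T hT => ?_⟩
  set K := Nat.clog 2 T
  have hT0 : (0:ℝ) < T := Nat.cast_pos.2 (by omega)
  have hε : (0:ℝ) < 1 / T := by positivity
  refine ⟨searchStrategy vA (1 / T) K, fun t _ _ => searchCut_mem_Icc vA hε.le K _ t,
    fun vB hB mB hmB hVm a b hcons hmyo => ?_⟩
  have hKε : (1 / 2 : ℝ) ^ K ≤ 1 / T := by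
    rw [one_div_pow]
    exact one_div_le_one_div_of_le hT0 (by exact_mod_cast Nat.le_pow_clog one_lt_two T)
  calc ∑ t ∈ Finset.Icc 1 T, (stackValue vA mB - uA vA a b t)
      ≤ ∑ t ∈ Finset.Icc 1 T, ((if t ≤ K then 1 else 0) + 2 * Δ * (1 / T)) :=
        Finset.sum_le_sum fun t ht => stackValue_sub_uA_le_of_searchStrategy hA hδ.le hB hδ
          hmB hVm hε hKε hcons hmyo ht
    _ ≤ K + T * (2 * Δ * (1 / T)) := sum_Icc_indicator_add_le T K _
    _ = K + 2 * Δ := by field_simp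
    _ ≤ (2 + 2 * Δ) * (1 + Real.log T) := by
      nlinarith [clog_two_le_one_add_two_mul_log T, Real.log_natCast_nonneg T]
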